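/- arXiv:math/0205159 — 8 statements merged into one kernel-verified Lean document; each statement's English description precedes it below -/
import Mathlib

section
/- Let A be a unital subalgebra of a unital C*-algebra B with factorization: every positive invertible b ∈ B equals a*a for some a ∈ A invertible in A. Then every invertible b ∈ B can be written b = u|a| where a ∈ A is invertible in A, u is a unitary in B, and u may be taken to be the unitary in the polar decomposition of b. -/
/-! Since `b` is invertible, so is `|b| = (b⋆b)^{1/2}`, and `u = b|b|⁻¹` is unitary. Factoring
the positive invertible element `b⋆b` as `a⋆a` with `a ∈ A⁻¹` gives `|a| = |b|`. -/

theorem mul_inv_mem_unitary_of_star_mul_self_eq {R : Type*} [Monoid R] [StarMul R] {b : R}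
    (hb : IsUnit b) (s : Rˣ) (hs : IsSelfAdjoint (s : R)) (hbs : star b * b = s * s) :
    b * ↑s⁻¹ ∈ unitary R := by
  have hs_inv : star (↑s⁻¹ : R) = ↑s⁻¹ := by
    rw [← Units.coe_star_inv, show star s = s from Units.ext hs]
  refine (hb.mul s⁻¹.isUnit).mem_unitary_of_star_mul_self ?_
  calc star (b * ↑s⁻¹) * (b * ↑s⁻¹) = ↑s⁻¹ * (star b * b) * ↑s⁻¹ := by
        rw [star_mul, hs_inv]; simp only [mul_assoc]
    _ = 1 := by simp [hbs]

theorem IsUnit.exists_mem_unitary_eq_mul_sqrt_star_mul_self {B : Type*} [CStarAlgebra B]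
    [PartialOrder B] [StarOrderedRing B] {b : B} (hb : IsUnit b) :
    ∃ u ∈ unitary B, b = u * CFC.sqrt (star b * b) := by
  have hs : IsUnit (CFC.sqrt (star b * b)) :=
    (CFC.isUnit_sqrt_iff _).mpr (hb.star.mul hb)
  refine ⟨_, mul_inv_mem_unitary_of_star_mul_self_eq hb hs.unit
    (CFC.sqrt_nonneg _).isSelfAdjoint (CFC.sqrt_mul_sqrt_self _).symm, ?_⟩
  simp [mul_assoc]

/-- If a unital subalgebra `A` of a unital C*-algebra `B` has factorization, then every
invertible `b ∈ B` can be written `b = u * |a|` with `a ∈ A` invertible in `A` and `u` a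
unitary of `B`, where `u` may be taken to be the unitary of the polar decomposition of `b`
(i.e. `b = u * |b|` as well). -/
theorem polar_decomposition_with_modulus_from_A
    {B : Type*} [CStarAlgebra B] [PartialOrder B] [StarOrderedRing B]
    (A : Subalgebra ℂ B)
    (hfac : ∀ b : B, 0 ≤ b → IsUnit b →
      ∃ a ∈ A, (∃ c ∈ A, a * c = 1 ∧ c * a = 1) ∧ b = star a * a) :
    ∀ b : B, IsUnit b →
      ∃ a ∈ A, (∃ c ∈ A, a * c = 1 ∧ c * a = 1) ∧
        ∃ u ∈ unitary B, b = u * CFC.sqrt (star a * a) ∧ b = u * CFC.sqrt (star b * b) := by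
  intro b hb
  obtain ⟨a, haA, ha_inv, hba⟩ := hfac (star b * b) (star_mul_self_nonneg b) (hb.star.mul hb)
  obtain ⟨u, hu, hbu⟩ := hb.exists_mem_unitary_eq_mul_sqrt_star_mul_self
  exact ⟨a, haA, ha_inv, u, hu, hba ▸ hbu, hbu⟩
end

section
/- Let A be a unital subalgebra of a unital C*-algebra B with factorization, and let x be invertible in B. Then the similarity xAx^{-1} also has factorization. -/
/-- If a unital subalgebra `A` of a unital C*-algebra `B` has factorization and `x ∈ B` is
invertible (with inverse `xinv`), then the similarity `x A x⁻¹` also has factorization: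
every positive invertible `b ∈ B` equals `star (x * a * xinv) * (x * a * xinv)` for some
`a ∈ A` invertible in `A` (so that `x * a * xinv` is invertible in `x A x⁻¹`). -/
theorem similarity_has_factorization
    {B : Type*} [CStarAlgebra B] [PartialOrder B] [StarOrderedRing B]
    (A : Subalgebra ℂ B)
    (hfac : ∀ b : B, 0 ≤ b → IsUnit b →
      ∃ a ∈ A, (∃ c ∈ A, a * c = 1 ∧ c * a = 1) ∧ b = star a * a)
    (x xinv : B) (hx : x * xinv = 1) (hx' : xinv * x = 1) :
    ∀ b : B, 0 ≤ b → IsUnit b →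
      ∃ a ∈ A, (∃ c ∈ A, a * c = 1 ∧ c * a = 1) ∧
        b = star (x * a * xinv) * (x * a * xinv) := by
  intro b hb hbu
  have hxu : IsUnit x := ⟨⟨x, xinv, hx, hx'⟩, rfl⟩
  -- factor `star x * x`
  obtain ⟨a0, ha0, ⟨c0, hc0, hac0, hca0⟩, hxx⟩ :=
    hfac (star x * x) (star_mul_self_nonneg x) (hxu.star.mul hxu)
  have hc0u : IsUnit c0 := ⟨⟨c0, a0, hca0, hac0⟩, rfl⟩
  have huu : IsUnit (x * c0) := hxu.mul hc0u
  -- factor the conjugated element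
  obtain ⟨a2, ha2, ⟨c2, hc2, hac2, hca2⟩, hceq⟩ :=
    hfac (star (x * c0) * b * (x * c0)) (star_left_conjugate_nonneg hb _)
      ((huu.star.mul hbu).mul huu)
  refine ⟨c0 * a2 * a0, mul_mem (mul_mem hc0 ha2) ha0,
    ⟨c0 * c2 * a0, mul_mem (mul_mem hc0 hc2) ha0, ?_, ?_⟩, ?_⟩
  · calc c0 * a2 * a0 * (c0 * c2 * a0)
        = c0 * (a2 * ((a0 * c0) * (c2 * a0))) := by simp only [mul_assoc]
      _ = c0 * a0 := by rw [hac0, one_mul, ← mul_assoc a2 c2 a0, hac2, one_mul]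
      _ = 1 := hca0
  · calc c0 * c2 * a0 * (c0 * a2 * a0)
        = c0 * (c2 * ((a0 * c0) * (a2 * a0))) := by simp only [mul_assoc]
      _ = c0 * a0 := by rw [hac0, one_mul, ← mul_assoc c2 a2 a0, hca2, one_mul]
      _ = 1 := hca0
  · -- key computation
    have h1 : star (x * c0) * (x * c0) = 1 := by
      calc star (x * c0) * (x * c0)
          = star c0 * (star x * x) * c0 := by simp only [star_mul, mul_assoc]
        _ = star (a0 * c0) * (a0 * c0) := by rw [hxx]; simp only [star_mul, mul_assoc]
        _ = 1 := by rw [hac0]; simp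
    have h2 : (x * c0) * (a0 * xinv) = 1 := by
      calc (x * c0) * (a0 * xinv) = x * (c0 * a0) * xinv := by simp only [mul_assoc]
        _ = 1 := by rw [hca0, mul_one, hx]
    have hy : x * (c0 * a2 * a0) * xinv = (x * c0) * a2 * (a0 * xinv) := by
      simp only [mul_assoc]
    rw [hy]
    calc b = star ((x * c0) * (a0 * xinv)) * b * ((x * c0) * (a0 * xinv)) := by
            rw [h2]; simp
      _ = star (a0 * xinv) * (star (x * c0) * b * (x * c0)) * (a0 * xinv) := by
            simp only [star_mul, mul_assoc]
      _ = star (a0 * xinv) * (star a2 * a2) * (a0 * xinv) := by rw [← hceq]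
      _ = star (a0 * xinv) * (star a2 * (star (x * c0) * (x * c0)) * a2) * (a0 * xinv) := by
            rw [h1]; simp
      _ = star ((x * c0) * a2 * (a0 * xinv)) * ((x * c0) * a2 * (a0 * xinv)) := by
            simp only [star_mul, mul_assoc]
end

section
/- Let A be a unital subalgebra of a unital C*-algebra B with factorization. For any invertible x ∈ B there is a unitary u ∈ B with xAx^{-1} = uAu*. -/
/-- If a unital subalgebra `A` of a unital C*-algebra `B` has factorization, then for any
invertible `x ∈ B` (with inverse `xinv`) there is a unitary `u ∈ B` with
`x A x⁻¹ = u A u*`. -/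
theorem similarity_eq_unitary_conjugate
    {B : Type*} [CStarAlgebra B] [PartialOrder B] [StarOrderedRing B]
    (A : Subalgebra ℂ B)
    (hfac : ∀ b : B, 0 ≤ b → IsUnit b →
      ∃ a ∈ A, (∃ c ∈ A, a * c = 1 ∧ c * a = 1) ∧ b = star a * a)
    (x xinv : B) (hx : x * xinv = 1) (hx' : xinv * x = 1) :
    ∃ u ∈ unitary B,
      (fun a => x * a * xinv) '' (A : Set B) = (fun a => u * a * star u) '' (A : Set B) := by
  have hxu : IsUnit x := ⟨⟨x, xinv, hx, hx'⟩, rfl⟩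
  have hbu : IsUnit (star x * x) := (hxu.star).mul hxu
  obtain ⟨a, haA, ⟨c, hcA, hac, hca⟩, hb⟩ := hfac (star x * x) (star_mul_self_nonneg x) hbu
  set u : B := x * c with hu
  have hv1 : u * (a * xinv) = 1 := by
    rw [hu]; rw [mul_assoc, ← mul_assoc c a, hca, one_mul, hx]
  have hv2 : (a * xinv) * u = 1 := by
    rw [hu]; rw [mul_assoc, ← mul_assoc xinv x, hx', one_mul, hac]
  have hsu : star u * u = 1 := by
    have : star u * u = star c * (star x * x) * c := by
      simp [hu, star_mul, mul_assoc]
    rw [this, hb]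
    calc star c * (star a * a) * c = star (a * c) * (a * c) := by
          simp [star_mul, mul_assoc]
      _ = 1 := by rw [hac]; simp
  have hstar : star u = a * xinv := by
    calc star u = star u * (u * (a * xinv)) := by rw [hv1, mul_one]
    _ = (star u * u) * (a * xinv) := by simp only [hu, mul_assoc]
    _ = a * xinv := by rw [hsu, one_mul]
  have hus : u * star u = 1 := by rw [hstar]; exact hv1
  refine ⟨u, Unitary.mem_iff.mpr ⟨hsu, hus⟩, ?_⟩
  have hxua : u * a = x := by rw [hu, mul_assoc, hca, mul_one]
  have hxinv : c * star u = xinv := by rw [hstar, ← mul_assoc, hca, one_mul]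
  ext y
  simp only [Set.mem_image]
  constructor
  · rintro ⟨a', ha', rfl⟩
    refine ⟨a * a' * c, mul_mem (mul_mem haA ha') hcA, ?_⟩
    rw [← hxua, ← hxinv]
    simp only [mul_assoc]
  · rintro ⟨a', ha', rfl⟩
    refine ⟨c * a' * a, mul_mem (mul_mem hcA ha') haA, ?_⟩
    rw [← hxua, ← hxinv]
    have h1 : x * c = u := hu.symm
    calc u * a * (c * a' * a) * (c * star u)
        = u * (a * c) * a' * ((a * c) * star u) := by simp only [mul_assoc]
      _ = u * a' * star u := by rw [hac]; simp [mul_assoc]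
end

section
/- Let A be a unital subalgebra of a unital C*-algebra B that is logmodular, and let x ∈ B be invertible. Then xAx^{-1} is logmodular: every positive invertible b ∈ B is a norm limit of elements (x c x^{-1})*(x c x^{-1}) with c ∈ A invertible in A. -/
open Filter Topology

private lemma conj_calc {B : Type*} [Ring B] [StarRing B] (a a' v : B) (h : a * a' = 1) :
    star (a' * v) * (star a * a) * (a' * v) = star v * v := by
  have h2 : star a' * star a = 1 := by rw [← star_mul, h, star_one]
  calc star (a' * v) * (star a * a) * (a' * v)
      = star v * (star a' * (star a * (a * (a' * v)))) := by
        simp [star_mul, mul_assoc]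
    _ = star v * v := by
        rw [← mul_assoc a a' v, h, one_mul, ← mul_assoc (star a') (star a) v, h2, one_mul]

/-- If `A` is a logmodular unital subalgebra of a unital C*-algebra `B` and `x ∈ B` is
invertible (with inverse `xinv`), then `x A x⁻¹` is logmodular: every positive invertible
`b ∈ B` is a norm limit of elements `star (x * c * xinv) * (x * c * xinv)` with `c ∈ A`
invertible in `A`. -/
theorem similarity_is_logmodular
    {B : Type*} [CStarAlgebra B] [PartialOrder B] [StarOrderedRing B]
    (A : Subalgebra ℂ B)
    (hlm : ∀ b : B, 0 ≤ b → IsUnit b →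
      b ∈ closure {y : B | ∃ a ∈ A, (∃ c ∈ A, a * c = 1 ∧ c * a = 1) ∧ y = star a * a})
    (x xinv : B) (hx : x * xinv = 1) (hx' : xinv * x = 1) :
    ∀ b : B, 0 ≤ b → IsUnit b →
      b ∈ closure {y : B | ∃ c ∈ A, (∃ d ∈ A, c * d = 1 ∧ d * c = 1) ∧
        y = star (x * c * xinv) * (x * c * xinv)} := by
  intro b hb hbu
  have hxu : IsUnit x := ⟨⟨x, xinv, hx, hx'⟩, rfl⟩
  set p : B := star x * x with hp_def
  set q : B := star x * b * x with hq_def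
  have hp_pos : (0 : B) ≤ p := star_mul_self_nonneg x
  have hq_pos : (0 : B) ≤ q := star_left_conjugate_nonneg hb x
  have hp_unit : IsUnit p := hxu.star.mul hxu
  have hq_unit : IsUnit q := (hxu.star.mul hbu).mul hxu
  obtain ⟨f, hfS, hf_tend⟩ := mem_closure_iff_seq_limit.mp (hlm p hp_pos hp_unit)
  obtain ⟨g, hgS, hg_tend⟩ := mem_closure_iff_seq_limit.mp (hlm q hq_pos hq_unit)
  simp only [Set.mem_setOf_eq] at hfS hgS
  choose a haA hrest hf using hfS
  choose a' ha'A haa' ha'a using hrest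
  choose v hvA grest hg using hgS
  choose v' hv'A hvv' hv'v using grest
  set c : ℕ → B := fun n => a' n * v n with hc_def
  set T : ℕ → B := fun n => star (x * c n * xinv) * (x * c n * xinv) with hT_def
  -- membership of the approximants in the target set
  have hmem : ∀ n, T n ∈ {y : B | ∃ c ∈ A, (∃ d ∈ A, c * d = 1 ∧ d * c = 1) ∧
      y = star (x * c * xinv) * (x * c * xinv)} := by
    intro n
    refine ⟨c n, mul_mem (ha'A n) (hvA n), ⟨v' n * a n, mul_mem (hv'A n) (haA n), ?_, ?_⟩, rfl⟩
    · show a' n * v n * (v' n * a n) = 1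
      calc a' n * v n * (v' n * a n) = a' n * (v n * v' n) * a n := by
            simp [mul_assoc]
        _ = 1 := by rw [hvv' n, mul_one, ha'a n]
    · show v' n * a n * (a' n * v n) = 1
      calc v' n * a n * (a' n * v n) = v' n * (a n * a' n) * v n := by
            simp [mul_assoc]
        _ = 1 := by rw [haa' n, mul_one, hv'v n]
  -- key algebraic identity
  have key : ∀ n, T n = star xinv * g n * xinv
      + star (c n * xinv) * (p - f n) * (c n * xinv) := by
    intro n
    have h1 : star (c n) * f n * c n = star (v n) * v n := by
      rw [hf n]
      exact conj_calc (a n) (a' n) (v n) (haa' n)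
    have h2 : star (c n) * p * c n = star (v n) * v n + star (c n) * (p - f n) * c n := by
      rw [← h1]; noncomm_ring
    have expand : T n = star xinv * (star (c n) * p * c n) * xinv := by
      rw [hp_def]
      show star (x * c n * xinv) * (x * c n * xinv) = _
      simp only [star_mul, mul_assoc]
    rw [expand, h2, ← hg n]
    simp only [star_mul]
    noncomm_ring
  -- limit of the first part
  have hq_eq : star xinv * q * xinv = b := by
    have h1 : star xinv * star x = 1 := by rw [← star_mul, hx, star_one]
    rw [hq_def]
    calc star xinv * (star x * b * x) * xinv
        = star xinv * star x * (b * (x * xinv)) := by simp [mul_assoc]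
      _ = b := by rw [h1, hx, one_mul, mul_one]
  have h1_tend : Tendsto (fun n => star xinv * g n * xinv) atTop (𝓝 b) := by
    have := (hg_tend.const_mul (star xinv)).mul_const xinv
    rwa [hq_eq] at this
  -- Ring.inverse of f n
  have hinv : ∀ n, Ring.inverse (f n) = a' n * star (a' n) := by
    intro n
    have e1 : f n * (a' n * star (a' n)) = 1 := by
      rw [hf n]
      calc star (a n) * a n * (a' n * star (a' n))
          = star (a n) * (a n * a' n) * star (a' n) := by simp [mul_assoc]
        _ = 1 := by rw [haa' n, mul_one, ← star_mul, ha'a n, star_one]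
    have e2 : (a' n * star (a' n)) * f n = 1 := by
      rw [hf n]
      calc a' n * star (a' n) * (star (a n) * a n)
          = a' n * star (a n * a' n) * a n := by simp [star_mul, mul_assoc]
        _ = 1 := by rw [haa' n, star_one, mul_one, ha'a n]
    exact Ring.inverse_unit ⟨f n, a' n * star (a' n), e1, e2⟩
  have hinv_tend : Tendsto (fun n => Ring.inverse (f n)) atTop (𝓝 (Ring.inverse p)) :=
    (NormedRing.inverse_continuousAt hp_unit.unit).tendsto.comp hf_tend
  -- the second part tends to 0
  have h2_tend : Tendsto (fun n => star (c n * xinv) * (p - f n) * (c n * xinv))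
      atTop (𝓝 0) := by
    rw [tendsto_zero_iff_norm_tendsto_zero]
    have hub : ∀ n, ‖star (c n * xinv) * (p - f n) * (c n * xinv)‖
        ≤ ‖Ring.inverse (f n)‖ * ‖g n‖ * (‖xinv‖ * ‖xinv‖) * ‖p - f n‖ := by
      intro n
      have hw : ‖c n * xinv‖ ≤ ‖a' n‖ * ‖v n‖ * ‖xinv‖ := by
        refine le_trans (norm_mul_le _ _) ?_
        gcongr
        exact norm_mul_le _ _
      have hb1 : ‖star (c n * xinv) * (p - f n) * (c n * xinv)‖
          ≤ ‖c n * xinv‖ * ‖p - f n‖ * ‖c n * xinv‖ := by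
        calc ‖star (c n * xinv) * (p - f n) * (c n * xinv)‖
            ≤ ‖star (c n * xinv) * (p - f n)‖ * ‖c n * xinv‖ := norm_mul_le _ _
          _ ≤ ‖star (c n * xinv)‖ * ‖p - f n‖ * ‖c n * xinv‖ := by
              gcongr; exact norm_mul_le _ _
          _ = ‖c n * xinv‖ * ‖p - f n‖ * ‖c n * xinv‖ := by rw [norm_star]
      have hb2 : ‖c n * xinv‖ * ‖p - f n‖ * ‖c n * xinv‖
          ≤ (‖a' n‖ * ‖v n‖ * ‖xinv‖) * ‖p - f n‖ * (‖a' n‖ * ‖v n‖ * ‖xinv‖) := by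
        gcongr
      have heq : (‖a' n‖ * ‖v n‖ * ‖xinv‖) * ‖p - f n‖ * (‖a' n‖ * ‖v n‖ * ‖xinv‖)
          = ‖Ring.inverse (f n)‖ * ‖g n‖ * (‖xinv‖ * ‖xinv‖) * ‖p - f n‖ := by
        rw [hinv n, hg n, CStarRing.norm_self_mul_star, CStarRing.norm_star_mul_self]
        ring
      exact le_trans hb1 (le_trans hb2 heq.le)
    have t1 : Tendsto (fun n => ‖p - f n‖) atTop (𝓝 0) := by
      have h0 : Tendsto (fun n => p - f n) atTop (𝓝 (p - p)) :=
        tendsto_const_nhds.sub hf_tend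
      rw [sub_self] at h0
      simpa using h0.norm
    have t2 := ((hinv_tend.norm.mul hg_tend.norm).mul_const (‖xinv‖ * ‖xinv‖)).mul t1
    rw [mul_zero] at t2
    exact squeeze_zero (fun n => norm_nonneg _) hub t2
  -- conclude
  have hT_tend : Tendsto T atTop (𝓝 b) := by
    have h := h1_tend.add h2_tend
    rw [add_zero] at h
    exact h.congr (fun n => (key n).symm)
  exact mem_closure_of_tendsto hT_tend (Filter.Eventually.of_forall hmem)
end

section
/- Let T : A → B be a linear map between unital C*-algebras such that T(x y* z) = T(x) T(y)* T(z) for all x, y, z ∈ A (a triple morphism) and T is injective. Set u = T(1) and π(a) = u* T(a). Then u is a partial isometry (u u* u = u), π is a *-homomorphism A → B with u*u π(a) = π(a) and T(a) = u π(a) for all a. -/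
/-- An injective triple morphism `T` between unital C*-algebras decomposes as
`T = u π(·)` with `u = T(1)` a partial isometry and `π = u* T(·)` an injective
*-homomorphism satisfying `u* u π(a) = π(a)`. -/
theorem triple_morphism_decomposition
    {A B : Type*} [CStarAlgebra A] [CStarAlgebra B]
    (T : A →ₗ[ℂ] B)
    (htriple : ∀ x y z : A, T (x * star y * z) = T x * star (T y) * T z)
    (hinj : Function.Injective T) :
    T 1 * star (T 1) * T 1 = T 1 ∧
    (∀ a b : A, star (T 1) * T (a * b) = (star (T 1) * T a) * (star (T 1) * T b)) ∧
    (∀ a : A, star (T 1) * T (star a) = star (star (T 1) * T a)) ∧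
    (∀ a : A, (star (T 1) * T 1) * (star (T 1) * T a) = star (T 1) * T a) ∧
    (∀ a : A, T a = T 1 * (star (T 1) * T a)) ∧
    Function.Injective (fun a : A => star (T 1) * T a) := by
  have hleft : ∀ a : A, T 1 * star (T 1) * T a = T a := fun a => by
    simpa using (htriple 1 1 a).symm
  have hright : ∀ a : A, T a * (star (T 1) * T 1) = T a := fun a => by
    simpa [mul_assoc] using (htriple a 1 1).symm
  have hmul : ∀ x z : A, T (x * z) = T x * star (T 1) * T z := fun x z => by
    simpa using htriple x 1 z
  have hstar : ∀ a : A, T (star a) = T 1 * star (T a) * T 1 := fun a => by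
    simpa using htriple 1 a 1
  have hleftstar : ∀ a : A, star (T 1) * T 1 * star (T a) = star (T a) := fun a => by
    have := congrArg star (hright a)
    simpa [star_mul, mul_assoc] using this
  have hTa_u : ∀ a : A, T a = T 1 * (star (T 1) * T a) := fun a => by
    rw [← mul_assoc]; exact (hleft a).symm
  refine ⟨hleft 1, ?_, ?_, ?_, hTa_u, ?_⟩
  · intro a b
    rw [hmul a b]
    simp [mul_assoc]
  · intro a
    rw [hstar a, star_mul, star_star]
    calc star (T 1) * (T 1 * star (T a) * T 1)
        = (star (T 1) * T 1 * star (T a)) * T 1 := by simp [mul_assoc]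
      _ = star (T a) * T 1 := by rw [hleftstar a]
  · intro a
    calc (star (T 1) * T 1) * (star (T 1) * T a)
        = star (T 1) * (T 1 * star (T 1) * T a) := by simp [mul_assoc]
      _ = star (T 1) * T a := by rw [hleft a]
  · intro a b hab
    simp only at hab
    exact hinj (by rw [hTa_u a, hab, ← hTa_u b])
end

section
/- Let T : A → B be an injective triple morphism between unital C*-algebras. If T(A) contains a co-isometry of B (an element v with v v* = 1), then T(1) is a co-isometry. -/
/-- If an injective triple morphism `T` between unital C*-algebras has a co-isometry in
its range, then `T 1` is a co-isometry. -/
theorem triple_morphism_coisometry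
    {A B : Type*} [CStarAlgebra A] [CStarAlgebra B]
    (T : A →ₗ[ℂ] B)
    (htriple : ∀ x y z : A, T (x * star y * z) = T x * star (T y) * T z)
    (hinj : Function.Injective T)
    (hco : ∃ a₀ : A, T a₀ * star (T a₀) = 1) :
    T 1 * star (T 1) = 1 := by
  obtain ⟨a₀, h⟩ := hco
  have h1 : T 1 * star (T 1) * T a₀ = T a₀ := by
    have := htriple 1 1 a₀
    simpa using this.symm
  calc T 1 * star (T 1) = T 1 * star (T 1) * (T a₀ * star (T a₀)) := by rw [h, mul_one]
    _ = T 1 * star (T 1) * T a₀ * star (T a₀) := by noncomm_ring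
    _ = T a₀ * star (T a₀) := by rw [h1]
    _ = 1 := h
end

section
/- Let T : A → B be an injective triple morphism between unital C*-algebras with 1_B ∈ T(A). Then u = T(1_A) is a unitary of B, the range T(A) is a C*-subalgebra of B, T(A) = π(A) where π = u*T(·), and π is a unital *-homomorphism. -/
/-!
Evaluating the triple identity with `1` and a preimage `b` of `1` in the outer slots shows
that `u = T 1` is unitary and that `π = u⋆ T(·)` is multiplicative, `*`-preserving and unital.
Its range agrees with that of `T` (`π a = T (b a)` and `T a = π (b⋆ a)`), so the range of `T`
is a `*`-subalgebra; it is closed because `π` is injective together with `T`, and injective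
`*`-homomorphisms of C⋆-algebras are isometric.
-/

def IsTripleMorphism {A B : Type*} [Mul A] [Star A] [Mul B] [Star B] (T : A → B) : Prop :=
  ∀ x y z : A, T (x * star y * z) = T x * star (T y) * T z

namespace IsTripleMorphism

section Monoid

variable {A B : Type*} [Monoid A] [StarMul A] [Monoid B] [StarMul B] {T : A → B}

theorem map_mul (hT : IsTripleMorphism T) (a c : A) : T (a * c) = T a * star (T 1) * T c := by
  simpa using hT a 1 c

theorem map_star (hT : IsTripleMorphism T) (a : A) : T (star a) = T 1 * star (T a) * T 1 := by
  simpa using hT 1 a 1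

theorem map_one_mul_star_map_one {b : A} (hT : IsTripleMorphism T) (hb : T b = 1) :
    T 1 * star (T 1) = 1 := by
  simpa [hb] using (hT 1 1 b).symm

theorem star_map_one_mul_map_one {b : A} (hT : IsTripleMorphism T) (hb : T b = 1) :
    star (T 1) * T 1 = 1 := by
  simpa [hb] using (hT b 1 1).symm

theorem map_mul_of_map_eq_one {b : A} (hT : IsTripleMorphism T) (hb : T b = 1) (a : A) :
    T (b * a) = star (T 1) * T a := by
  rw [hT.map_mul, hb, one_mul]

theorem map_star_mul_of_map_eq_one {b : A} (hT : IsTripleMorphism T) (hb : T b = 1) (a : A) :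
    T (star b * a) = T 1 * T a := by
  simpa [hb] using hT 1 b a

theorem range_eq_range_star_map_one_mul {b : A} (hT : IsTripleMorphism T) (hb : T b = 1) :
    Set.range T = Set.range (fun a : A => star (T 1) * T a) := by
  ext x
  constructor
  · rintro ⟨a, rfl⟩
    refine ⟨star b * a, ?_⟩
    change star (T 1) * T (star b * a) = T a
    rw [hT.map_star_mul_of_map_eq_one hb, ← mul_assoc, hT.star_map_one_mul_map_one hb, one_mul]
  · rintro ⟨a, rfl⟩
    exact ⟨b * a, hT.map_mul_of_map_eq_one hb a⟩

end Monoid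

section Algebra

variable {R A B : Type*} [CommSemiring R] [Semiring A] [StarRing A] [Algebra R A]
  [Semiring B] [StarRing B] [Algebra R B]

def toStarAlgHom (T : A →ₗ[R] B) (hT : IsTripleMorphism T) {b : A} (hb : T b = 1) :
    A →⋆ₐ[R] B where
  toAlgHom := AlgHom.ofLinearMap ((LinearMap.mulLeft R (star (T 1))).comp T)
    (hT.star_map_one_mul_map_one hb)
    (fun a c => by
      simp only [LinearMap.comp_apply, LinearMap.mulLeft_apply, hT.map_mul, mul_assoc])
  map_star' a := by
    change star (T 1) * T (star a) = star (star (T 1) * T a)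
    rw [hT.map_star, star_mul, star_star, ← mul_assoc, ← mul_assoc,
      hT.star_map_one_mul_map_one hb, one_mul]

@[simp]
theorem toStarAlgHom_apply (T : A →ₗ[R] B) (hT : IsTripleMorphism T) {b : A} (hb : T b = 1)
    (a : A) : hT.toStarAlgHom T hb a = star (T 1) * T a :=
  rfl

theorem toStarAlgHom_injective (T : A →ₗ[R] B) (hT : IsTripleMorphism T) {b : A} (hb : T b = 1)
    (hinj : Function.Injective T) : Function.Injective (hT.toStarAlgHom T hb) := by
  intro a c hac
  apply hinj
  have := congrArg (T 1 * ·) hac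
  simpa only [toStarAlgHom_apply, ← mul_assoc, hT.map_one_mul_star_map_one hb, one_mul] using this

end Algebra

end IsTripleMorphism

/-- If `T : A → B` is an injective triple morphism between unital C*-algebras with
`1_B ∈ T(A)`, then `u = T(1)` is a unitary of `B`, the range of `T` is a C*-subalgebra of
`B`, `T(A) = π(A)` for the unital *-homomorphism `π = u* T(·)`. -/
theorem triple_morphism_with_one_in_range
    {A B : Type*} [CStarAlgebra A] [CStarAlgebra B]
    (T : A →ₗ[ℂ] B)
    (htriple : ∀ x y z : A, T (x * star y * z) = T x * star (T y) * T z)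
    (hinj : Function.Injective T)
    (hone : (1 : B) ∈ Set.range T) :
    (star (T 1) * T 1 = 1 ∧ T 1 * star (T 1) = 1) ∧
    (IsClosed (Set.range T) ∧
      (∀ x ∈ Set.range T, star x ∈ Set.range T) ∧
      (∀ x ∈ Set.range T, ∀ y ∈ Set.range T, x * y ∈ Set.range T)) ∧
    Set.range T = Set.range (fun a : A => star (T 1) * T a) ∧
    (star (T 1) * T 1 = 1 ∧
      (∀ a b : A, star (T 1) * T (a * b) = (star (T 1) * T a) * (star (T 1) * T b)) ∧
      (∀ a : A, star (T 1) * T (star a) = star (star (T 1) * T a))) := by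
  obtain ⟨b, hb⟩ := hone
  have hT : IsTripleMorphism T := htriple
  set π := hT.toStarAlgHom T hb
  have hrange : Set.range T = Set.range π := hT.range_eq_range_star_map_one_mul hb
  have hclosed : IsClosed (Set.range π) :=
    (NonUnitalStarAlgHom.isometry π
      (hT.toStarAlgHom_injective T hb hinj)).isClosedEmbedding.isClosed_range
  refine ⟨⟨hT.star_map_one_mul_map_one hb, hT.map_one_mul_star_map_one hb⟩,
    ⟨hrange ▸ hclosed, ?_, ?_⟩, hT.range_eq_range_star_map_one_mul hb,
    hT.star_map_one_mul_map_one hb, map_mul π, map_star π⟩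
  · rw [hrange]
    rintro _ ⟨a, rfl⟩
    exact ⟨star a, map_star π a⟩
  · rw [hrange]
    rintro _ ⟨a, rfl⟩ _ ⟨c, rfl⟩
    exact ⟨a * c, map_mul π a c⟩
end

section
/- Let H be a Hilbert space, A a set of bounded operators on H closed under products in the sense that for the maps considered T(a)T(b) = T(1)T(ab), and suppose there is K > 0 with ‖ζ‖ ≤ K sup{‖T(a)ζ‖ : a ∈ Ball(A)} for all ζ ∈ H, where all T(a) are contractions. Then ‖ζ‖ ≤ K²‖T(1)ζ‖ for all ζ ∈ H; in particular T(1) is bounded below. -/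
/-- If `T : A → B(H)` is a linear contraction-valued map with `T(a)T(b) = T(ab)T(1)`,
and `‖ζ‖ ≤ K · sup {‖T(a)ζ‖ : a ∈ Ball(A)}` for all `ζ ∈ H`, then
`‖ζ‖ ≤ K² ‖T(1)ζ‖` for all `ζ`; in particular `T(1)` is bounded below. -/
theorem bounded_below_of_sup_estimate
    {H : Type*} [NormedAddCommGroup H] [InnerProductSpace ℂ H] [CompleteSpace H]
    {A : Type*} [NormedRing A] [NormedAlgebra ℂ A] [CompleteSpace A] [NormOneClass A]
    (T : A →ₗ[ℂ] (H →L[ℂ] H))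
    (hcontr : ∀ a : A, ‖T a‖ ≤ ‖a‖)
    (hmul : ∀ a b : A, T a * T b = T (a * b) * T 1)
    (K : ℝ) (hK : 0 < K)
    (hbound : ∀ ζ : H, ‖ζ‖ ≤ K * ⨆ a : Metric.closedBall (0 : A) 1, ‖T a ζ‖) :
    ∀ ζ : H, ‖ζ‖ ≤ K ^ 2 * ‖T 1 ζ‖ := by
  intro ζ
  have hne : Nonempty (Metric.closedBall (0 : A) 1) :=
    ⟨⟨0, Metric.mem_closedBall_self zero_le_one⟩⟩
  -- Each ‖T a ζ‖ (for a in the ball) is at most K * ‖T 1 ζ‖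
  have key : ∀ a : Metric.closedBall (0 : A) 1, ‖T a ζ‖ ≤ K * ‖T 1 ζ‖ := by
    intro a
    have h1 := hbound (T a ζ)
    have h2 : (⨆ b : Metric.closedBall (0 : A) 1, ‖T b (T a ζ)‖) ≤ ‖T 1 ζ‖ := by
      apply ciSup_le
      intro b
      have hb : ‖(b : A)‖ ≤ 1 := by
        simpa using mem_closedBall_zero_iff.mp b.2
      have ha : ‖(a : A)‖ ≤ 1 := by
        simpa using mem_closedBall_zero_iff.mp a.2
      have heq : T b (T a ζ) = T ((b : A) * a) (T 1 ζ) := by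
        have := hmul (b : A) (a : A)
        calc T b (T a ζ) = (T b * T a) ζ := rfl
          _ = (T ((b : A) * a) * T 1) ζ := by rw [this]
          _ = T ((b : A) * a) (T 1 ζ) := rfl
      rw [heq]
      calc ‖T ((b : A) * a) (T 1 ζ)‖ ≤ ‖T ((b : A) * a)‖ * ‖T 1 ζ‖ :=
            ContinuousLinearMap.le_opNorm _ _
        _ ≤ 1 * ‖T 1 ζ‖ := by
            apply mul_le_mul_of_nonneg_right _ (norm_nonneg _)
            calc ‖T ((b : A) * a)‖ ≤ ‖(b : A) * a‖ := hcontr _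
              _ ≤ ‖(b : A)‖ * ‖(a : A)‖ := norm_mul_le _ _
              _ ≤ 1 * 1 := mul_le_mul hb ha (norm_nonneg _) zero_le_one
              _ = 1 := one_mul 1
        _ = ‖T 1 ζ‖ := one_mul _
    calc ‖T a ζ‖ ≤ K * ⨆ b : Metric.closedBall (0 : A) 1, ‖T b (T a ζ)‖ := h1
      _ ≤ K * ‖T 1 ζ‖ := mul_le_mul_of_nonneg_left h2 hK.le
  calc ‖ζ‖ ≤ K * ⨆ a : Metric.closedBall (0 : A) 1, ‖T a ζ‖ := hbound ζ
    _ ≤ K * (K * ‖T 1 ζ‖) :=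
        mul_le_mul_of_nonneg_left (ciSup_le key) hK.le
    _ = K ^ 2 * ‖T 1 ζ‖ := by ring
end
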